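/- Let $a, b, c, d$ be nonzero rationals, $m_1, m_2, m_3, m_4 \geq 3$ odd integers, $M = \mathrm{lcm}(m_1, m_2, m_3, m_4)$, $M_i = M/m_i$. Suppose $p, q, r \in \mathbb{Q}$ and nonzero $v_1, v_2, v_3, v_4, u \in \mathbb{Q}$ satisfy $v_1^{2m_1}(p^2 - a) = v_2^{2m_2}(q^2 - b) = v_3^{2m_3}(r^2 - c)$ and $v_4^{2m_4} + d(r^2 - c) v_3^{2m_3} \neq 0$. Set $T = \frac{u^2}{v_4^{2m_4} + d(r^2 - c)v_3^{2m_3}}$ and assume $T \neq 0$ and $r^2 \neq c$. Define $x_1 = \frac{1}{v_1^2 T^{M_1}}$, $x_2 = \frac{1}{v_2^2 T^{M_2}}$, $x_3 = \frac{1}{v_3^2 T^{M_3}}$, $x_4 = v_4^2 T^{M_4}$, $y_1 = p$, $y_2 = q$, $y_3 = r$, $y_4 = u T^{(M-1)/2}$. Then $\frac{y_1^2 - a}{x_1^{m_1}} = \frac{y_2^2 - b}{x_2^{m_2}} = \frac{y_3^2 - c}{x_3^{m_3}} = \frac{y_4^2 - x_4^{m_4}}{d}$. -/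

import Mathlib

/-!
Each of the four quotients equals `T ^ M * v₃ ^ (2 m₃) (r² - c)`. For the first three this is
`x_i ^ m_i = 1 / (v_i ^ (2 m_i) T ^ M)`, as `m_i ∣ M`. For the last, `M` is odd, so
`y₄² = u² T ^ (M - 1)`; and `T ≠ 0` forces the denominator of `T` to be nonzero, so
`u² = T (v₄ ^ (2 m₄) + d (r² - c) v₃ ^ (2 m₃))`, whence
`y₄² - x₄ ^ m₄ = d (r² - c) v₃ ^ (2 m₃) T ^ M`.
-/

theorem Nat.odd_lcm {m n : ℕ} (hm : Odd m) (hn : Odd n) : Odd (m.lcm n) :=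
  (hm.mul hn).of_dvd_nat (Nat.lcm_dvd_mul m n)

section Field

variable {F : Type*} [Field F]

theorem sq_mul_pow_div_pow (v T : F) {m n : ℕ} (h : m ∣ n) :
    (v ^ 2 * T ^ (n / m)) ^ m = v ^ (2 * m) * T ^ n := by
  rw [mul_pow, ← pow_mul, ← pow_mul, Nat.div_mul_cancel h]

theorem div_one_div_sq_mul_pow_div_pow (s v T : F) {m n : ℕ} (h : m ∣ n) :
    s / (1 / (v ^ 2 * T ^ (n / m))) ^ m = v ^ (2 * m) * s * T ^ n := by
  rw [one_div_pow, div_div_eq_mul_div, div_one, sq_mul_pow_div_pow v T h]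
  ring

theorem sq_mul_pow_pred_div_two_sub {u T w z : F} {n : ℕ} (hn : Odd n)
    (hT : T * (w + z) = u ^ 2) :
    (u * T ^ ((n - 1) / 2)) ^ 2 - w * T ^ n = z * T ^ n := by
  obtain ⟨k, rfl⟩ := hn
  rw [Nat.add_sub_cancel, Nat.mul_div_cancel_left k two_pos]
  linear_combination -T ^ (2 * k) * hT

end Field

theorem parametric_solution_system_three_general (a b c d : ℚ)
    (hd : d ≠ 0)
    (m1 m2 m3 m4 : ℕ)
    (ho1 : Odd m1) (ho2 : Odd m2) (ho3 : Odd m3) (ho4 : Odd m4)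
    (p q r v1 v2 v3 v4 u : ℚ)
    (h1 : v1 ^ (2 * m1) * (p ^ 2 - a) = v2 ^ (2 * m2) * (q ^ 2 - b))
    (h2 : v2 ^ (2 * m2) * (q ^ 2 - b) = v3 ^ (2 * m3) * (r ^ 2 - c)) :
    let M := Nat.lcm (Nat.lcm m1 m2) (Nat.lcm m3 m4)
    let M1 := M / m1
    let M2 := M / m2
    let M3 := M / m3
    let M4 := M / m4
    let T := u ^ 2 / (v4 ^ (2 * m4) + d * (r ^ 2 - c) * v3 ^ (2 * m3))
    T ≠ 0 →
    let x1 := 1 / (v1 ^ 2 * T ^ M1)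
    let x2 := 1 / (v2 ^ 2 * T ^ M2)
    let x3 := 1 / (v3 ^ 2 * T ^ M3)
    let x4 := v4 ^ 2 * T ^ M4
    let y1 := p
    let y2 := q
    let y3 := r
    let y4 := u * T ^ ((M - 1) / 2)
    ((y1 ^ 2 - a) / x1 ^ m1 = (y2 ^ 2 - b) / x2 ^ m2) ∧
    ((y2 ^ 2 - b) / x2 ^ m2 = (y3 ^ 2 - c) / x3 ^ m3) ∧
    ((y3 ^ 2 - c) / x3 ^ m3 = (y4 ^ 2 - x4 ^ m4) / d) := by
  intro M M1 M2 M3 M4 T hT x1 x2 x3 x4 y1 y2 y3 y4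
  have hM1 : m1 ∣ M := (Nat.dvd_lcm_left m1 m2).trans (Nat.dvd_lcm_left _ _)
  have hM2 : m2 ∣ M := (Nat.dvd_lcm_right m1 m2).trans (Nat.dvd_lcm_left _ _)
  have hM3 : m3 ∣ M := (Nat.dvd_lcm_left m3 m4).trans (Nat.dvd_lcm_right _ _)
  have hM4 : m4 ∣ M := (Nat.dvd_lcm_right m3 m4).trans (Nat.dvd_lcm_right _ _)
  have hModd : Odd M := Nat.odd_lcm (Nat.odd_lcm ho1 ho2) (Nat.odd_lcm ho3 ho4)
  have hTu : T * (v4 ^ (2 * m4) + d * (r ^ 2 - c) * v3 ^ (2 * m3)) = u ^ 2 := by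
    refine mul_comm _ _ |>.trans (mul_div_cancel₀ _ fun h0 => hT ?_)
    simp only [T, h0, div_zero]
  simp only [x1, x2, x3, x4, y1, y2, y3, y4, M1, M2, M3, M4,
    div_one_div_sq_mul_pow_div_pow _ _ T hM1, div_one_div_sq_mul_pow_div_pow _ _ T hM2,
    div_one_div_sq_mul_pow_div_pow _ _ T hM3, sq_mul_pow_div_pow v4 T hM4,
    sq_mul_pow_pred_div_two_sub hModd hTu]
  refine ⟨by rw [h1], by rw [h2], ?_⟩
  rw [eq_div_iff hd]
  ring

theorem parametric_solution_system_three (a b c d : ℚ)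
    (ha : a ≠ 0) (hb : b ≠ 0) (hc : c ≠ 0) (hd : d ≠ 0)
    (m1 m2 m3 m4 : ℕ) (hm1 : 3 ≤ m1) (hm2 : 3 ≤ m2) (hm3 : 3 ≤ m3) (hm4 : 3 ≤ m4)
    (ho1 : Odd m1) (ho2 : Odd m2) (ho3 : Odd m3) (ho4 : Odd m4)
    (p q r v1 v2 v3 v4 u : ℚ)
    (hv1 : v1 ≠ 0) (hv2 : v2 ≠ 0) (hv3 : v3 ≠ 0) (hv4 : v4 ≠ 0) (hu : u ≠ 0)
    (h1 : v1 ^ (2 * m1) * (p ^ 2 - a) = v2 ^ (2 * m2) * (q ^ 2 - b))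
    (h2 : v2 ^ (2 * m2) * (q ^ 2 - b) = v3 ^ (2 * m3) * (r ^ 2 - c))
    (hden : v4 ^ (2 * m4) + d * (r ^ 2 - c) * v3 ^ (2 * m3) ≠ 0)
    (hrc : r ^ 2 ≠ c) :
    let M := Nat.lcm (Nat.lcm m1 m2) (Nat.lcm m3 m4)
    let M1 := M / m1
    let M2 := M / m2
    let M3 := M / m3
    let M4 := M / m4
    let T := u ^ 2 / (v4 ^ (2 * m4) + d * (r ^ 2 - c) * v3 ^ (2 * m3))
    T ≠ 0 →
    let x1 := 1 / (v1 ^ 2 * T ^ M1)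
    let x2 := 1 / (v2 ^ 2 * T ^ M2)
    let x3 := 1 / (v3 ^ 2 * T ^ M3)
    let x4 := v4 ^ 2 * T ^ M4
    let y1 := p
    let y2 := q
    let y3 := r
    let y4 := u * T ^ ((M - 1) / 2)
    ((y1 ^ 2 - a) / x1 ^ m1 = (y2 ^ 2 - b) / x2 ^ m2) ∧
    ((y2 ^ 2 - b) / x2 ^ m2 = (y3 ^ 2 - c) / x3 ^ m3) ∧
    ((y3 ^ 2 - c) / x3 ^ m3 = (y4 ^ 2 - x4 ^ m4) / d) :=
  parametric_solution_system_three_general a b c d hd m1 m2 m3 m4 ho1 ho2 ho3 ho4 p q r v1 v2 v3 v4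
    u h1 h2
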